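/- Let X be a set with |X| = 3k and let C be a collection of 3-element subsets of X with |C| = 3k such that every element of X belongs to exactly three members of C. Consider the financial network with banks s_c for c ∈ C, t_x for x ∈ X, and S, T; external assets e_{s_c} = 4 and all other external assets 0; liabilities l_{s_c, t_x} = 1 for each x ∈ c, l_{s_c, S} = Z, l_{t_x, T} = 1, and all other liabilities 0; no default costs (α = β = 1). Then there exists Z_0 such that for all Z ≥ Z_0: there exists a set R of edges such that setting l_{ij} = 0 for all (i,j) ∈ R yields maximal clearing payments with systemic liquidity at least 14k, if and only if there exists C' ⊆ C with |C'| = k whose members are pairwise disjoint (i.e., C' covers every element of X exactly once). -/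

import Mathlib

open Finset

/-- `p` is a proportional clearing payment matrix for the network with external assets `e`,
liabilities `l` and default costs `α, β`. -/
def IsClearing {ι : Type*} [Fintype ι] (α β : ℝ) (e : ι → ℝ) (l : ι → ι → ℝ)
    (p : ι → ι → ℝ) : Prop :=
  (∀ i j, 0 ≤ p i j) ∧ (∀ i j, p i j ≤ l i j) ∧
  (∀ i, (∑ j, l i j) ≤ e i + (∑ j, p j i) → ∀ j, p i j = l i j) ∧
  (∀ i, e i + (∑ j, p j i) < (∑ j, l i j) →
    ∀ j, p i j = (α * e i + β * (∑ k, p k i)) * l i j / (∑ k, l i k))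

/-- `p` is the maximal clearing payment matrix. -/
def IsMaxClearing {ι : Type*} [Fintype ι] (α β : ℝ) (e : ι → ℝ) (l p : ι → ι → ℝ) : Prop :=
  IsClearing α β e l p ∧ ∀ q, IsClearing α β e l q → ∀ i j, q i j ≤ p i j

/-- Systemic liquidity: the sum of all payments. -/
def liquidity {ι : Type*} [Fintype ι] (p : ι → ι → ℝ) : ℝ := ∑ i, ∑ j, p i j

/-!
Nobody owes anything to a bank `s_c`, so in every clearing matrix it pays out `min(L_c, 4)`
pro rata: exactly its liabilities (at most `3`) if its edge to `S` was removed,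
and otherwise `4` in total, hence at most `4 / Z` to each `t_x`. If the edges to `S` of a family
`D` of triples are removed, an element outside `⋃ D` therefore receives at most `12 / Z`, and the
liquidity is at most `12k - |D| + |⋃ D| + 36k / Z`. For `Z > 36k`, liquidity `14k` forces
`2k + |D| ≤ |⋃ D| ≤ min(3|D|, 3k)`, so `|D| = k` and the `k` triples of `D` cover all `3k`
elements: they are pairwise disjoint. Conversely, removing the edges to `S` of an exact cover
makes every `t_x` solvent; the rows of the `s_c` are forced and all other banks pay in full,
which gives the maximal clearing matrix, with liquidity `3k + 8k + 3k = 14k`.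
-/

section ProportionalPayment

variable {ι : Type*} [Fintype ι] {a : ℝ} {l : ι → ℝ}

noncomputable def proportionalPayment (a : ℝ) (l : ι → ℝ) (j : ι) : ℝ :=
  if ∑ k, l k ≤ a then l j else a * l j / ∑ k, l k

lemma proportionalPayment_of_sum_le (h : ∑ k, l k ≤ a) : proportionalPayment a l = l :=
  funext fun _ => if_pos h

lemma proportionalPayment_nonneg (ha : 0 ≤ a) (hl : ∀ j, 0 ≤ l j) (j : ι) :
    0 ≤ proportionalPayment a l j := by
  unfold proportionalPayment
  split_ifs
  · exact hl j
  · exact div_nonneg (mul_nonneg ha (hl j)) (Finset.sum_nonneg fun k _ => hl k)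

lemma proportionalPayment_le (ha : 0 ≤ a) (hl : 0 ≤ l j) : proportionalPayment a l j ≤ l j := by
  unfold proportionalPayment
  split_ifs with h
  · exact le_rfl
  · rw [not_le] at h
    rw [div_le_iff₀ (ha.trans_lt h), mul_comm (l j)]
    exact mul_le_mul_of_nonneg_right h.le hl

lemma proportionalPayment_le_div (hL : 0 < ∑ k, l k) (hl : 0 ≤ l j) :
    proportionalPayment a l j ≤ a * l j / ∑ k, l k := by
  unfold proportionalPayment
  split_ifs with h
  · rw [le_div_iff₀ hL, mul_comm]
    exact mul_le_mul_of_nonneg_right h hl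
  · exact le_rfl

lemma sum_proportionalPayment (ha : 0 ≤ a) :
    ∑ j, proportionalPayment a l j = min (∑ k, l k) a := by
  unfold proportionalPayment
  split_ifs with h
  · exact (min_eq_left h).symm
  · rw [not_le] at h
    rw [min_eq_right h.le, ← Finset.sum_div, ← Finset.mul_sum,
      mul_div_cancel_right₀ _ (ha.trans_lt h).ne']

end ProportionalPayment

section Clearing

variable {ι : Type*} [Fintype ι] {e : ι → ℝ} {l p : ι → ι → ℝ}

lemma isClearing_one_one_iff :
    IsClearing 1 1 e l p ↔ (∀ i j, 0 ≤ p i j) ∧ (∀ i j, p i j ≤ l i j) ∧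
      ∀ i, p i = proportionalPayment (e i + ∑ k, p k i) (l i) := by
  refine ⟨fun ⟨hp0, hpl, hsolvent, hdefault⟩ => ⟨hp0, hpl, fun i => funext fun j => ?_⟩,
    fun ⟨hp0, hpl, hrow⟩ => ⟨hp0, hpl, fun i hi j => ?_, fun i hi j => ?_⟩⟩
  · unfold proportionalPayment
    split_ifs with hi
    · exact hsolvent i hi j
    · rw [hdefault i (not_le.mp hi) j, one_mul, one_mul]
  · rw [congrFun (hrow i) j, proportionalPayment, if_pos hi]
  · rw [congrFun (hrow i) j, proportionalPayment, if_neg hi.not_ge, one_mul, one_mul]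

lemma IsClearing.eq_zero_of_nonpos {α β : ℝ} (hp : IsClearing α β e l p) {i j : ι}
    (h : l i j ≤ 0) : p i j = 0 :=
  le_antisymm ((hp.2.1 i j).trans h) (hp.1 i j)

lemma IsClearing.sum_row (hp : IsClearing 1 1 e l p) {i : ι} (he : 0 ≤ e i) :
    ∑ j, p i j = min (∑ j, l i j) (e i + ∑ k, p k i) := by
  obtain ⟨hp0, -, hrow⟩ := isClearing_one_one_iff.mp hp
  rw [hrow i, sum_proportionalPayment (add_nonneg he (Finset.sum_nonneg fun k _ => hp0 k i))]

end Clearing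

section RemoveEdges

variable {ι : Type*} [DecidableEq ι] {R : Finset (ι × ι)} {l : ι → ι → ℝ} {i j : ι}

def removeEdges (R : Finset (ι × ι)) (l : ι → ι → ℝ) : ι → ι → ℝ :=
  fun i j => if (i, j) ∈ R then 0 else l i j

lemma removeEdges_nonneg (hl : 0 ≤ l i j) : 0 ≤ removeEdges R l i j := by
  unfold removeEdges; split_ifs <;> simp [hl]

lemma removeEdges_le (hl : 0 ≤ l i j) : removeEdges R l i j ≤ l i j := by
  unfold removeEdges; split_ifs <;> simp [hl]

end RemoveEdges

lemma Finset.pairwiseDisjoint_of_card_biUnion_eq {ι β : Type*} [DecidableEq β] {s : Finset ι}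
    {t : ι → Finset β} (h : #(s.biUnion t) = ∑ a ∈ s, #(t a)) :
    (s : Set ι).PairwiseDisjoint t := by
  classical
  intro a ha b hb hab
  rw [Function.onFun, Finset.disjoint_left]
  intro x hxa hxb
  have hsplit : s.biUnion t = t b ∪ (s.erase b).biUnion t := by
    rw [← biUnion_insert, insert_erase hb]
  have hoverlap : 0 < #(t b ∩ (s.erase b).biUnion t) :=
    card_pos.mpr ⟨x, mem_inter.mpr ⟨hxb, mem_biUnion.mpr ⟨a, mem_erase.mpr ⟨hab, ha⟩, hxa⟩⟩⟩
  have hrest : #((s.erase b).biUnion t) ≤ ∑ a ∈ s.erase b, #(t a) := card_biUnion_le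
  have := card_union_add_card_inter (t b) ((s.erase b).biUnion t)
  rw [← hsplit, h, ← add_sum_erase s _ hb] at this
  omega

section Triples

variable {X : Type*} [Fintype X] [DecidableEq X] {k : ℕ} {D : Finset (Finset X)}

lemma card_eq_and_pairwiseDisjoint_of_le_card_biUnion (hX : Fintype.card X = 3 * k)
    (h3 : ∀ c ∈ D, #c = 3) (h : 2 * k + #D ≤ #(D.biUnion id)) :
    #D = k ∧ (D : Set (Finset X)).PairwiseDisjoint id := by
  have hsum : ∑ c ∈ D, #c = #D * 3 := sum_const_nat h3
  have hle : #(D.biUnion id) ≤ ∑ c ∈ D, #c := card_biUnion_le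
  have huniv : #(D.biUnion id) ≤ 3 * k := hX ▸ card_le_univ _
  refine ⟨by omega, pairwiseDisjoint_of_card_biUnion_eq ?_⟩
  simp only [id]
  omega

lemma biUnion_eq_univ_of_pairwiseDisjoint (hX : Fintype.card X = 3 * k)
    (h3 : ∀ c ∈ D, #c = 3) (hcard : #D = k) (hD : (D : Set (Finset X)).PairwiseDisjoint id) :
    D.biUnion id = univ :=
  eq_univ_of_card _ <| by
    rw [card_biUnion hD, hX, ← hcard, mul_comm]
    exact sum_const_nat h3

end Triples

namespace RXC3

variable {X : Type*} {C : Finset (Finset X)}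

abbrev Bank (C : Finset (Finset X)) : Type _ := {c : Finset X // c ∈ C} ⊕ X ⊕ Fin 2

variable {R : Finset (Bank C × Bank C)}

open Classical in
noncomputable def cutSources (R : Finset (Bank C × Bank C)) : Finset (Finset X) :=
  (univ.filter fun c : {c // c ∈ C} => (Sum.inl c, Sum.inr (Sum.inr 0)) ∈ R).map
    (Function.Embedding.subtype _)

lemma mem_cutSources {c : {c // c ∈ C}} :
    c.1 ∈ cutSources R ↔ (Sum.inl c, Sum.inr (Sum.inr 0)) ∈ R := by
  simp [cutSources]

lemma cutSources_subset : cutSources R ⊆ C := by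
  intro c hc
  simp only [cutSources, mem_map, mem_filter, mem_univ, true_and,
    Function.Embedding.subtype_apply] at hc
  obtain ⟨c', -, rfl⟩ := hc
  exact c'.2

lemma liquidity_eq_sum_rows [Fintype X] (q : Bank C → Bank C → ℝ) :
    liquidity q = ∑ c : {c // c ∈ C}, ∑ j, q (Sum.inl c) j
      + ∑ x : X, ∑ j, q (Sum.inr (Sum.inl x)) j + ∑ i : Fin 2, ∑ j, q (Sum.inr (Sum.inr i)) j := by
  rw [liquidity, Fintype.sum_sum_type, Fintype.sum_sum_type, add_assoc]

variable [DecidableEq X]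

def assets (C : Finset (Finset X)) : Bank C → ℝ := fun b => match b with
  | Sum.inl _ => 4
  | Sum.inr _ => 0

def liabilities (C : Finset (Finset X)) (Z : ℝ) : Bank C → Bank C → ℝ
  | Sum.inl c, Sum.inr (Sum.inl x) => if x ∈ c.1 then 1 else 0
  | Sum.inl _, Sum.inr (Sum.inr j) => if j = 0 then Z else 0
  | Sum.inr (Sum.inl _), Sum.inr (Sum.inr j) => if j = 1 then 1 else 0
  | Sum.inl _, Sum.inl _ => 0
  | Sum.inr (Sum.inl _), Sum.inl _ => 0
  | Sum.inr (Sum.inl _), Sum.inr (Sum.inl _) => 0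
  | Sum.inr (Sum.inr _), _ => 0

variable {Z : ℝ}

@[simp] lemma liabilities_to_source (i : Bank C) (c : {c // c ∈ C}) :
    liabilities C Z i (Sum.inl c) = 0 := by
  rcases i with _ | _ | _ <;> rfl

lemma liabilities_to_target_of_inr (b : X ⊕ Fin 2) (x : X) :
    liabilities C Z (Sum.inr b) (Sum.inr (Sum.inl x)) = 0 := by
  rcases b with _ | _ <;> rfl

@[simp] lemma liabilities_sink (i : Fin 2) (j : Bank C) :
    liabilities C Z (Sum.inr (Sum.inr i)) j = 0 := by
  rcases j with _ | _ | _ <;> rfl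

lemma liabilities_nonneg (hZ : 0 ≤ Z) (i j : Bank C) : 0 ≤ liabilities C Z i j := by
  rcases i with c | x | i <;> rcases j with c' | y | j <;> simp only [liabilities] <;>
    positivity

@[simp] lemma liabilities_source_target (c : {c // c ∈ C}) (x : X) :
    liabilities C Z (Sum.inl c) (Sum.inr (Sum.inl x)) = if x ∈ c.1 then 1 else 0 := rfl

/-- Cutting the edge to `S` has the effect of setting `Z = 0` in the row of `s_c`. -/
lemma removeEdges_source_le_of_cut (hZ : 0 ≤ Z) {c : {c // c ∈ C}}
    (hc : (Sum.inl c, Sum.inr (Sum.inr 0)) ∈ R) (j : Bank C) :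
    removeEdges R (liabilities C Z) (Sum.inl c) j ≤ liabilities C 0 (Sum.inl c) j := by
  rcases j with c' | x | i
  · exact (removeEdges_le (liabilities_nonneg hZ _ _)).trans_eq rfl
  · exact (removeEdges_le (liabilities_nonneg hZ _ _)).trans_eq rfl
  · fin_cases i
    · simp [removeEdges, hc, liabilities]
    · exact (removeEdges_le (liabilities_nonneg hZ _ _)).trans_eq rfl

lemma sum_ite_mem_three_four {D : Finset (Finset X)} (hD : D ⊆ C) :
    ∑ c : {c // c ∈ C}, (if c.1 ∈ D then (3 : ℝ) else 4) = 4 * #C - #D := by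
  have h : ∀ c ∈ C, (if c ∈ D then (3 : ℝ) else 4) = 4 - if c ∈ D then 1 else 0 := by
    intro c _; split_ifs <;> norm_num
  rw [sum_coe_sort C (fun c => if c ∈ D then (3 : ℝ) else 4), sum_congr rfl h, sum_sub_distrib,
    sum_boole, filter_mem_eq_inter, inter_eq_right.mpr hD, sum_const, nsmul_eq_mul]
  ring

variable {C' : Finset (Finset X)}

open Classical in
noncomputable def sinkEdges (C C' : Finset (Finset X)) : Finset (Bank C × Bank C) :=
  (univ.filter fun c : {c // c ∈ C} => c.1 ∈ C').image
    fun c => (Sum.inl c, Sum.inr (Sum.inr 0))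

lemma removeEdges_sinkEdges_source (c : {c // c ∈ C}) :
    removeEdges (sinkEdges C C') (liabilities C Z) (Sum.inl c)
      = liabilities C (if c.1 ∈ C' then 0 else Z) (Sum.inl c) := by
  funext j
  rcases j with c' | x | i
  · simp [removeEdges]
  · simp [removeEdges, sinkEdges]
  · fin_cases i <;> by_cases hc : c.1 ∈ C' <;> simp [removeEdges, sinkEdges, liabilities, hc]

lemma removeEdges_sinkEdges_inr (b : X ⊕ Fin 2) :
    removeEdges (sinkEdges C C') (liabilities C Z) (Sum.inr b) = liabilities C Z (Sum.inr b) :=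
  funext fun _ => if_neg (by simp [sinkEdges])

variable [Fintype X]

lemma sum_liabilities_source (c : {c // c ∈ C}) :
    ∑ j, liabilities C Z (Sum.inl c) j = Z + #c.1 := by
  simp [liabilities, Fintype.sum_sum_type, add_comm]

lemma sum_liabilities_target (x : X) : ∑ j, liabilities C Z (Sum.inr (Sum.inl x)) j = 1 := by
  simp [liabilities, Fintype.sum_sum_type]

variable {q : Bank C → Bank C → ℝ}

lemma income_source_eq_zero (hZ : 0 ≤ Z) (hq0 : ∀ i j, 0 ≤ q i j)
    (hql : ∀ i j, q i j ≤ removeEdges R (liabilities C Z) i j) (c : {c // c ∈ C}) :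
    ∑ i, q i (Sum.inl c) = 0 :=
  sum_eq_zero fun i _ => le_antisymm
    ((hql i _).trans ((removeEdges_le (liabilities_nonneg hZ _ _)).trans_eq
      (liabilities_to_source i c))) (hq0 i _)

lemma row_source_eq (hZ : 0 ≤ Z)
    (hq : IsClearing 1 1 (assets C) (removeEdges R (liabilities C Z)) q) (c : {c // c ∈ C}) :
    q (Sum.inl c) = proportionalPayment 4 (removeEdges R (liabilities C Z) (Sum.inl c)) := by
  rw [(isClearing_one_one_iff.mp hq).2.2 (Sum.inl c), income_source_eq_zero hZ hq.1 hq.2.1 c,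
    add_zero]
  rfl

lemma sum_row_source_le (hZ : 0 ≤ Z)
    (hq : IsClearing 1 1 (assets C) (removeEdges R (liabilities C Z)) q) {c : {c // c ∈ C}}
    (hc3 : #c.1 = 3) : ∑ j, q (Sum.inl c) j ≤ if c.1 ∈ cutSources R then 3 else 4 := by
  rw [hq.sum_row (by norm_num [assets]), income_source_eq_zero hZ hq.1 hq.2.1 c]
  split_ifs with hcut
  · refine (min_le_left _ _).trans ?_
    calc ∑ j, removeEdges R (liabilities C Z) (Sum.inl c) j
        ≤ ∑ j, liabilities C 0 (Sum.inl c) j :=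
          sum_le_sum fun j _ => removeEdges_source_le_of_cut hZ (mem_cutSources.mp hcut) j
      _ = 3 := by rw [sum_liabilities_source, hc3]; norm_num
  · exact (min_le_right _ _).trans (by norm_num [assets])

lemma payment_source_target_le (hZ : 0 < Z)
    (hq : IsClearing 1 1 (assets C) (removeEdges R (liabilities C Z)) q) {c : {c // c ∈ C}}
    (hc : c.1 ∉ cutSources R) (x : X) : q (Sum.inl c) (Sum.inr (Sum.inl x)) ≤ 4 / Z := by
  set l' := removeEdges R (liabilities C Z)
  have hl' : ∀ i j, 0 ≤ l' i j := fun i j => removeEdges_nonneg (liabilities_nonneg hZ.le i j)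
  have hZL : Z ≤ ∑ j, l' (Sum.inl c) j := by
    have hsink : l' (Sum.inl c) (Sum.inr (Sum.inr 0)) = Z :=
      if_neg (mt mem_cutSources.mpr hc)
    exact hsink ▸ single_le_sum (fun j _ => hl' _ j) (mem_univ _)
  have hx : l' (Sum.inl c) (Sum.inr (Sum.inl x)) ≤ 1 :=
    (removeEdges_le (liabilities_nonneg hZ.le _ _)).trans <| by
      rw [liabilities_source_target]; split_ifs <;> norm_num
  rw [row_source_eq hZ.le hq c]
  calc proportionalPayment 4 (l' (Sum.inl c)) (Sum.inr (Sum.inl x))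
      ≤ 4 * l' (Sum.inl c) (Sum.inr (Sum.inl x)) / ∑ j, l' (Sum.inl c) j :=
        proportionalPayment_le_div (hZ.trans_le hZL) (hl' _ _)
    _ ≤ 4 * 1 / Z := div_le_div₀ (by norm_num) (by linarith) hZ hZL
    _ = 4 / Z := by rw [mul_one]

lemma income_target_le (hZ : 0 < Z)
    (hq : IsClearing 1 1 (assets C) (removeEdges R (liabilities C Z)) q) {x : X}
    (hcover : #(C.filter (fun c => x ∈ c)) = 3) (hx : x ∉ (cutSources R).biUnion id) :
    ∑ i, q i (Sum.inr (Sum.inl x)) ≤ 12 / Z := by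
  have hzero : ∀ {i j}, liabilities C Z i j = 0 → q i j = 0 := fun h =>
    hq.eq_zero_of_nonpos ((removeEdges_le (liabilities_nonneg hZ.le _ _)).trans_eq h)
  have hsource : ∀ c : {c // c ∈ C},
      q (Sum.inl c) (Sum.inr (Sum.inl x)) ≤ if x ∈ c.1 then 4 / Z else 0 := by
    intro c
    split_ifs with hxc
    · exact payment_source_target_le hZ hq (fun hc => hx (mem_biUnion.mpr ⟨c.1, hc, hxc⟩)) x
    · exact (hzero (by simp [hxc])).le
  calc ∑ i, q i (Sum.inr (Sum.inl x))
      = ∑ c : {c // c ∈ C}, q (Sum.inl c) (Sum.inr (Sum.inl x)) := by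
        rw [Fintype.sum_sum_type, add_eq_left]
        exact sum_eq_zero fun b _ => hzero (liabilities_to_target_of_inr b x)
    _ ≤ ∑ c : {c // c ∈ C}, if x ∈ c.1 then 4 / Z else 0 := sum_le_sum fun c _ => hsource c
    _ = 12 / Z := by
      rw [sum_coe_sort C (fun c => if x ∈ c then 4 / Z else 0), ← sum_filter, sum_const,
        hcover, nsmul_eq_mul]
      ring

lemma sum_row_target_le (hZ : 0 < Z)
    (hq : IsClearing 1 1 (assets C) (removeEdges R (liabilities C Z)) q) {x : X}
    (hcover : #(C.filter (fun c => x ∈ c)) = 3) :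
    ∑ j, q (Sum.inr (Sum.inl x)) j
      ≤ (if x ∈ (cutSources R).biUnion id then 1 else 0) + 12 / Z := by
  have h12 : 0 < 12 / Z := by positivity
  rw [hq.sum_row le_rfl]
  split_ifs with hx
  · calc _ ≤ ∑ j, removeEdges R (liabilities C Z) (Sum.inr (Sum.inl x)) j := min_le_left _ _
      _ ≤ ∑ j, liabilities C Z (Sum.inr (Sum.inl x)) j :=
          sum_le_sum fun j _ => removeEdges_le (liabilities_nonneg hZ.le _ j)
      _ ≤ 1 + 12 / Z := by rw [sum_liabilities_target]; linarith
  · calc _ ≤ assets C (Sum.inr (Sum.inl x)) + ∑ i, q i (Sum.inr (Sum.inl x)) :=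
          min_le_right _ _
      _ = ∑ i, q i (Sum.inr (Sum.inl x)) := zero_add _
      _ ≤ 0 + 12 / Z := (income_target_le hZ hq hcover hx).trans_eq (zero_add _).symm

lemma sum_row_sink (hZ : 0 ≤ Z)
    (hq : IsClearing 1 1 (assets C) (removeEdges R (liabilities C Z)) q) (i : Fin 2) :
    ∑ j, q (Sum.inr (Sum.inr i)) j = 0 :=
  sum_eq_zero fun j _ => hq.eq_zero_of_nonpos
    ((removeEdges_le (liabilities_nonneg hZ _ _)).trans_eq (liabilities_sink i j))

lemma liquidity_le (hC3 : ∀ c ∈ C, #c = 3)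
    (hcover : ∀ x : X, #(C.filter (fun c => x ∈ c)) = 3) (hZ : 0 < Z)
    (hq : IsClearing 1 1 (assets C) (removeEdges R (liabilities C Z)) q) :
    liquidity q ≤ 4 * #C - #(cutSources R) + #((cutSources R).biUnion id)
      + Fintype.card X * (12 / Z) := by
  have hsources : ∑ c : {c // c ∈ C}, ∑ j, q (Sum.inl c) j ≤ 4 * #C - #(cutSources R) :=
    (sum_le_sum fun c _ => sum_row_source_le hZ.le hq (hC3 c.1 c.2)).trans_eq
      (sum_ite_mem_three_four cutSources_subset)
  have htargets : ∑ x : X, ∑ j, q (Sum.inr (Sum.inl x)) j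
      ≤ #((cutSources R).biUnion id) + Fintype.card X * (12 / Z) := by
    refine (sum_le_sum fun x _ => sum_row_target_le hZ hq (hcover x)).trans_eq ?_
    rw [sum_add_distrib, sum_boole, filter_univ_mem, sum_const, card_univ, nsmul_eq_mul]
  rw [liquidity_eq_sum_rows, sum_eq_zero fun i _ => sum_row_sink hZ.le hq i]
  linarith

theorem exists_exactCover_of_le_liquidity {k : ℕ} (hX : Fintype.card X = 3 * k)
    (hCcard : #C = 3 * k) (hC3 : ∀ c ∈ C, #c = 3)
    (hcover : ∀ x : X, #(C.filter (fun c => x ∈ c)) = 3) (hZ : 36 * k < Z)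
    (hq : IsClearing 1 1 (assets C) (removeEdges R (liabilities C Z)) q)
    (hliq : 14 * k ≤ liquidity q) :
    ∃ C' ⊆ C, #C' = k ∧ ∀ c ∈ C', ∀ c' ∈ C', c ≠ c' → Disjoint c c' := by
  have hZ0 : 0 < Z := lt_of_le_of_lt (by positivity) hZ
  have hsmall : Fintype.card X * (12 / Z) < 1 := by
    rw [hX, mul_div_assoc', div_lt_one hZ0]; push_cast; linarith
  have hle := liquidity_le hC3 hcover hZ0 hq
  rw [hCcard] at hle
  have hcount : ((2 * k + #(cutSources R) : ℕ) : ℝ) < #((cutSources R).biUnion id) + 1 := by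
    push_cast at hle ⊢
    linarith
  obtain ⟨hcard, hdisj⟩ :=
    card_eq_and_pairwiseDisjoint_of_le_card_biUnion hX (fun c hc => hC3 c (cutSources_subset hc))
      (Nat.lt_succ_iff.mp (by exact_mod_cast hcount))
  exact ⟨cutSources R, cutSources_subset, hcard, fun c hc c' hc' hne => hdisj hc hc' hne⟩

noncomputable def coverPayments (C C' : Finset (Finset X)) (Z : ℝ) : Bank C → Bank C → ℝ
  | Sum.inl c =>
    proportionalPayment 4 (removeEdges (sinkEdges C C') (liabilities C Z) (Sum.inl c))
  | Sum.inr b => removeEdges (sinkEdges C C') (liabilities C Z) (Sum.inr b)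

lemma coverPayments_nonneg (hZ : 0 ≤ Z) (i j : Bank C) : 0 ≤ coverPayments C C' Z i j := by
  rcases i with c | b
  · exact proportionalPayment_nonneg (by norm_num)
      (fun j => removeEdges_nonneg (liabilities_nonneg hZ _ j)) j
  · exact removeEdges_nonneg (liabilities_nonneg hZ _ _)

lemma coverPayments_le (hZ : 0 ≤ Z) (i j : Bank C) :
    coverPayments C C' Z i j ≤ removeEdges (sinkEdges C C') (liabilities C Z) i j := by
  rcases i with c | b
  · exact proportionalPayment_le (by norm_num) (removeEdges_nonneg (liabilities_nonneg hZ _ j))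
  · exact le_rfl

lemma coverPayments_source_of_mem {c : {c // c ∈ C}} (hc3 : #c.1 = 3) (hc : c.1 ∈ C') :
    coverPayments C C' Z (Sum.inl c) = liabilities C 0 (Sum.inl c) := by
  change proportionalPayment 4 _ = _
  rw [removeEdges_sinkEdges_source, if_pos hc]
  exact proportionalPayment_of_sum_le (by rw [sum_liabilities_source, hc3]; norm_num)

lemma isClearing_coverPayments (hZ : 0 ≤ Z) (hC3 : ∀ c ∈ C, #c = 3) (hC' : C' ⊆ C)
    (hcov : C'.biUnion id = univ) :
    IsClearing 1 1 (assets C) (removeEdges (sinkEdges C C') (liabilities C Z))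
      (coverPayments C C' Z) := by
  refine isClearing_one_one_iff.mpr ⟨coverPayments_nonneg hZ, coverPayments_le hZ, ?_⟩
  rintro (c | b)
  · rw [income_source_eq_zero hZ (coverPayments_nonneg hZ) (coverPayments_le hZ) c, add_zero]
    rfl
  · change removeEdges _ _ (Sum.inr b) = _
    refine (proportionalPayment_of_sum_le ?_).symm
    have hincome : 0 ≤ ∑ i, coverPayments C C' Z i (Sum.inr b) :=
      sum_nonneg fun i _ => coverPayments_nonneg hZ i _
    rw [removeEdges_sinkEdges_inr, assets, zero_add]
    rcases b with x | i
    · obtain ⟨c, hc, hxc⟩ := mem_biUnion.mp (hcov ▸ mem_univ x)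
      have hpay : coverPayments C C' Z (Sum.inl ⟨c, hC' hc⟩) (Sum.inr (Sum.inl x)) = 1 := by
        rw [coverPayments_source_of_mem (hC3 c (hC' hc)) hc]
        exact if_pos hxc
      rw [sum_liabilities_target, ← hpay]
      exact single_le_sum (fun i _ => coverPayments_nonneg hZ i _) (mem_univ _)
    · simpa using hincome

lemma isMaxClearing_coverPayments (hZ : 0 ≤ Z) (hC3 : ∀ c ∈ C, #c = 3) (hC' : C' ⊆ C)
    (hcov : C'.biUnion id = univ) :
    IsMaxClearing 1 1 (assets C) (removeEdges (sinkEdges C C') (liabilities C Z))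
      (coverPayments C C' Z) := by
  refine ⟨isClearing_coverPayments hZ hC3 hC' hcov, fun q hq i j => ?_⟩
  rcases i with c | b
  · exact (congrFun (row_source_eq hZ hq c) j).le
  · exact hq.2.1 _ _

lemma liquidity_coverPayments (hZ : 1 ≤ Z) (hC3 : ∀ c ∈ C, #c = 3) (hC' : C' ⊆ C) :
    liquidity (coverPayments C C' Z) = 4 * #C - #C' + Fintype.card X := by
  have hsource : ∀ c : {c // c ∈ C},
      ∑ j, coverPayments C C' Z (Sum.inl c) j = if c.1 ∈ C' then 3 else 4 := by
    intro c
    change ∑ j, proportionalPayment 4 _ j = _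
    rw [sum_proportionalPayment (by norm_num), removeEdges_sinkEdges_source,
      sum_liabilities_source, hC3 c.1 c.2]
    split_ifs
    · norm_num
    · exact min_eq_right (by push_cast; linarith)
  have htarget : ∀ x : X, ∑ j, coverPayments C C' Z (Sum.inr (Sum.inl x)) j = 1 := fun x => by
    change ∑ j, removeEdges _ _ _ j = 1
    rw [removeEdges_sinkEdges_inr, sum_liabilities_target]
  have hsink : ∀ i : Fin 2, ∑ j, coverPayments C C' Z (Sum.inr (Sum.inr i)) j = 0 := by
    intro i
    change ∑ j, removeEdges _ _ _ j = 0
    simp [removeEdges_sinkEdges_inr]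
  rw [liquidity_eq_sum_rows, ← sum_ite_mem_three_four hC']
  simp only [hsource, htarget, hsink, sum_const, card_univ, nsmul_eq_mul, mul_one, mul_zero,
    add_zero]

end RXC3

/-- Correctness of the reduction from RXC3 showing NP-hardness of computing an edge set
whose removal maximizes systemic liquidity.  Banks: `Sum.inl c` is the bank s_c for
`c ∈ C`, `Sum.inr (Sum.inl x)` is the bank t_x for `x ∈ X`, `Sum.inr (Sum.inr 0)` is S
and `Sum.inr (Sum.inr 1)` is T. -/
theorem rxc3_reduction_debt_removal
    (X : Type*) [Fintype X] [DecidableEq X] (k : ℕ)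
    (hX : Fintype.card X = 3 * k)
    (C : Finset (Finset X)) (hCcard : C.card = 3 * k)
    (hC3 : ∀ c ∈ C, c.card = 3)
    (hcover : ∀ x : X, (C.filter (fun c => x ∈ c)).card = 3)
    (e : ({c : Finset X // c ∈ C} ⊕ X ⊕ Fin 2) → ℝ)
    (he : e = fun b => match b with
      | Sum.inl _ => 4
      | Sum.inr _ => 0) :
    ∃ Z₀ : ℝ, ∀ Z : ℝ, Z₀ ≤ Z →
      ∀ l : ({c : Finset X // c ∈ C} ⊕ X ⊕ Fin 2) →
            ({c : Finset X // c ∈ C} ⊕ X ⊕ Fin 2) → ℝ,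
      l = (fun a b => match a, b with
        | Sum.inl c, Sum.inr (Sum.inl x) => if x ∈ c.1 then 1 else 0
        | Sum.inl _, Sum.inr (Sum.inr j) => if j = 0 then Z else 0
        | Sum.inr (Sum.inl _), Sum.inr (Sum.inr j) => if j = 1 then 1 else 0
        | _, _ => 0) →
      ((∃ R : Finset (({c : Finset X // c ∈ C} ⊕ X ⊕ Fin 2) ×
            ({c : Finset X // c ∈ C} ⊕ X ⊕ Fin 2)),
          ∃ p, IsMaxClearing 1 1 e (fun i j => if (i, j) ∈ R then 0 else l i j) p ∧
            (14 * k : ℝ) ≤ liquidity p)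
        ↔ (∃ C' ⊆ C, C'.card = k ∧
            ∀ c ∈ C', ∀ c' ∈ C', c ≠ c' → Disjoint c c')) := by
  subst he
  refine ⟨36 * k + 1, fun Z hZ l hl => ?_⟩
  obtain rfl : l = RXC3.liabilities C Z := by
    subst hl
    funext a b
    rcases a with _ | _ | _ <;> rcases b with _ | _ | _ <;> rfl
  have hk : (0 : ℝ) ≤ k := k.cast_nonneg
  constructor
  · rintro ⟨R, p, ⟨hp, -⟩, hliq⟩
    exact RXC3.exists_exactCover_of_le_liquidity hX hCcard hC3 hcover (by linarith) hp hliq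
  · rintro ⟨C', hC', hcard, hdisj⟩
    have hcov : C'.biUnion id = univ :=
      biUnion_eq_univ_of_pairwiseDisjoint hX (fun c hc => hC3 c (hC' hc)) hcard
        fun c hc c' hc' => hdisj c hc c' hc'
    refine ⟨RXC3.sinkEdges C C', RXC3.coverPayments C C' Z,
      RXC3.isMaxClearing_coverPayments (by linarith) hC3 hC' hcov, ?_⟩
    rw [RXC3.liquidity_coverPayments (by linarith) hC3 hC', hCcard, hcard, hX]
    push_cast
    linarith
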